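/- arXiv:1512.06482 — 4 statements merged into one kernel-verified Lean document; each statement's English description precedes it below -/
import Mathlib

section
/- Let $W$ be an $n \times n$ complex Hermitian matrix with spectral decomposition $W = \sum_{i=1}^n \lambda_i u_i u_i^H$, where $\lambda_1, \dots, \lambda_n$ are the (real) eigenvalues of $W$ and $u_1, \dots, u_n$ form an orthonormal basis of eigenvectors. Define $X(W) := \sum_{i : \lambda_i > 0} \lambda_i u_i u_i^H$. Then for every $n \times n$ Hermitian positive semidefinite matrix $X$, $\|X - W\|_2^2 \geq \|X(W) - W\|_2^2$; that is, $X(W)$ minimizes the squared Frobenius distance to $W$ over the set of Hermitian positive semidefinite matrices. -/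
/-!
Let `P` be the sum over the positive eigenvalues. Then `P - W = N := ∑_{λᵢ ≤ 0} (-λᵢ) uᵢ uᵢᴴ`,
which is positive semidefinite and satisfies `P N = 0` by orthonormality of the `uᵢ`. Hence
`‖X - W‖² = ‖X - P‖² + ‖N‖² + 2 Re tr((X - P)ᴴ N)`, and the cross term is `Re tr(X N) ≥ 0`
because `X` and `N` are both positive semidefinite.
-/

open Matrix Finset
open scoped ComplexOrder

/-- Squared Frobenius norm of a complex matrix: `Re (tr (Mᴴ M))`. -/
noncomputable def frobSq {n : ℕ} (M : Matrix (Fin n) (Fin n) ℂ) : ℝ :=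
  ((Mᴴ * M).trace).re

section RankOneSums

variable {ι κ : Type*} [Fintype ι]

lemma sum_smul_vecMulVec_mul_sum_smul_vecMulVec_eq_zero {R : Type*} [CommSemiring R]
    {u v : κ → ι → R} (horth : ∀ i j, i ≠ j → v i ⬝ᵥ u j = 0) {s t : Finset κ}
    (hst : Disjoint s t) (a b : κ → R) :
    (∑ i ∈ s, a i • vecMulVec (u i) (v i)) * (∑ j ∈ t, b j • vecMulVec (u j) (v j)) = 0 := by
  rw [Finset.sum_mul_sum]
  refine Finset.sum_eq_zero fun i hi => Finset.sum_eq_zero fun j hj => ?_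
  rw [smul_mul_smul_comm, vecMulVec_mul_vecMulVec, horth i j (Finset.disjoint_left.mp hst hi <| · ▸ hj),
    zero_smul, vecMulVec_zero, smul_zero]

variable {𝕜 : Type*} [RCLike 𝕜]

lemma posSemidef_sum_smul_vecMulVec_self_star (s : Finset κ) {c : κ → 𝕜}
    (hc : ∀ i ∈ s, 0 ≤ c i) (u : κ → ι → 𝕜) :
    (∑ i ∈ s, c i • vecMulVec (u i) (star (u i))).PosSemidef :=
  posSemidef_sum s fun i hi => (posSemidef_vecMulVec_self_star (u i)).smul (hc i hi)

lemma Matrix.PosSemidef.trace_mul_sum_smul_vecMulVec_self_star_nonneg {X : Matrix ι ι 𝕜}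
    (hX : X.PosSemidef) (s : Finset κ) {c : κ → 𝕜} (hc : ∀ i ∈ s, 0 ≤ c i) (u : κ → ι → 𝕜) :
    0 ≤ (X * ∑ i ∈ s, c i • vecMulVec (u i) (star (u i))).trace := by
  rw [Finset.mul_sum, trace_sum]
  refine Finset.sum_nonneg fun i hi => ?_
  rw [Matrix.mul_smul, trace_smul, mul_vecMulVec, trace_vecMulVec, dotProduct_comm, smul_eq_mul]
  exact mul_nonneg (hc i hi) (hX.dotProduct_mulVec_nonneg (u i))

end RankOneSums

section Frobenius

variable {n : ℕ}

lemma frobSq_nonneg (M : Matrix (Fin n) (Fin n) ℂ) : 0 ≤ frobSq M :=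
  (Complex.nonneg_iff.mp (posSemidef_conjTranspose_mul_self M).trace_nonneg).1

lemma frobSq_add (A B : Matrix (Fin n) (Fin n) ℂ) :
    frobSq (A + B) = frobSq A + frobSq B + 2 * (Aᴴ * B).trace.re := by
  have hBA : (Bᴴ * A).trace = star (Aᴴ * B).trace := by
    rw [← trace_conjTranspose, conjTranspose_mul, conjTranspose_conjTranspose]
  have hexpand : (A + B)ᴴ * (A + B) = Aᴴ * A + Aᴴ * B + Bᴴ * A + Bᴴ * B := by
    rw [conjTranspose_add]; noncomm_ring
  simp only [frobSq, hexpand, trace_add, Complex.add_re, hBA, Complex.star_def, Complex.conj_re]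
  ring

lemma frobSq_le_frobSq_add {A B : Matrix (Fin n) (Fin n) ℂ} (h : 0 ≤ (Aᴴ * B).trace.re) :
    frobSq B ≤ frobSq (A + B) := by
  rw [frobSq_add]
  linarith [frobSq_nonneg A]

end Frobenius

theorem stmt_0_general {n : ℕ} (W : Matrix (Fin n) (Fin n) ℂ)
    (lam : Fin n → ℝ) (u : Fin n → (Fin n → ℂ))
    (horth : ∀ i j, star (u i) ⬝ᵥ u j = if i = j then 1 else 0)
    (hspec : W = ∑ i, (lam i : ℂ) • Matrix.vecMulVec (u i) (star (u i)))
    (X : Matrix (Fin n) (Fin n) ℂ) (hX : X.PosSemidef) :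
    frobSq (X - W) ≥
      frobSq ((∑ i ∈ Finset.univ.filter (fun i => 0 < lam i),
        (lam i : ℂ) • Matrix.vecMulVec (u i) (star (u i))) - W) := by
  set s := Finset.univ.filter (fun i => 0 < lam i)
  set P := ∑ i ∈ s, (lam i : ℂ) • vecMulVec (u i) (star (u i))
  set N := ∑ i ∈ sᶜ, (-lam i : ℂ) • vecMulVec (u i) (star (u i))
  have hPW : P - W = N := by
    rw [hspec, ← Finset.sum_add_sum_compl s]
    simp only [P, N, neg_smul, Finset.sum_neg_distrib, sub_add_cancel_left]
  have hNcoeff : ∀ i ∈ sᶜ, (0 : ℂ) ≤ -lam i := fun i hi => by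
    rw [← Complex.ofReal_neg, Complex.zero_le_real]
    simpa [s] using hi
  have hPN : P * N = 0 :=
    sum_smul_vecMulVec_mul_sum_smul_vecMulVec_eq_zero (fun i j hij => by simp [horth, hij])
      disjoint_compl_right _ _
  have hP : P.PosSemidef := posSemidef_sum_smul_vecMulVec_self_star s
    (fun i hi => Complex.zero_le_real.mpr (Finset.mem_filter.mp hi).2.le) u
  have hcross : 0 ≤ ((X - P)ᴴ * N).trace.re := by
    rw [conjTranspose_sub, hX.1, hP.1, sub_mul, hPN, sub_zero]
    exact (Complex.nonneg_iff.mp (hX.trace_mul_sum_smul_vecMulVec_self_star_nonneg sᶜ hNcoeff u)).1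
  rw [hPW, ge_iff_le, ← sub_add_sub_cancel X P W, hPW]
  exact frobSq_le_frobSq_add hcross

theorem stmt_0 {n : ℕ} (W : Matrix (Fin n) (Fin n) ℂ) (hW : W.IsHermitian)
    (lam : Fin n → ℝ) (u : Fin n → (Fin n → ℂ))
    (horth : ∀ i j, star (u i) ⬝ᵥ u j = if i = j then 1 else 0)
    (hspec : W = ∑ i, (lam i : ℂ) • Matrix.vecMulVec (u i) (star (u i)))
    (X : Matrix (Fin n) (Fin n) ℂ) (hX : X.PosSemidef) :
    frobSq (X - W) ≥
      frobSq ((∑ i ∈ Finset.univ.filter (fun i => 0 < lam i),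
        (lam i : ℂ) • Matrix.vecMulVec (u i) (star (u i))) - W) :=
  stmt_0_general W lam u horth hspec X hX
end

section
/- Let $W$ be an $n \times n$ complex Hermitian matrix with real eigenvalues $\lambda_1, \dots, \lambda_n$ (counted with multiplicity). Then for every $n \times n$ Hermitian positive semidefinite matrix $X$, $\|X - W\|_2^2 \geq \sum_{i : \lambda_i \leq 0} \lambda_i^2$. -/
open Matrix Finset
open scoped ComplexOrder

/-!
Diagonalise `W = U D Uᴴ` with `U` unitary and `D = diag(λ)`. The Frobenius norm is unitarily
invariant, so `‖X - W‖² = ‖Y - D‖²` with `Y = Uᴴ X U` again positive semidefinite. Keeping only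
the diagonal entries, `‖Y - D‖² ≥ ∑ᵢ (Yᵢᵢ - λᵢ)²`, and since `Yᵢᵢ ≥ 0`, every term with
`λᵢ ≤ 0` is at least `λᵢ²`.
-/

lemma frobSq_eq_sum_normSq {n : ℕ} (M : Matrix (Fin n) (Fin n) ℂ) :
    frobSq M = ∑ i, ∑ j, Complex.normSq (M j i) := by
  simp only [frobSq, trace, Matrix.diag, mul_apply, conjTranspose_apply, Complex.re_sum]
  refine sum_congr rfl fun i _ => sum_congr rfl fun j _ => ?_
  simp [Complex.normSq_apply, Complex.mul_re, mul_comm]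

lemma sum_normSq_diag_le_frobSq {n : ℕ} (M : Matrix (Fin n) (Fin n) ℂ) :
    ∑ i, Complex.normSq (M i i) ≤ frobSq M := by
  rw [frobSq_eq_sum_normSq]
  exact sum_le_sum fun i _ =>
    single_le_sum (f := fun j => Complex.normSq (M j i)) (fun j _ => Complex.normSq_nonneg _)
      (mem_univ i)

lemma frobSq_star_mul_mul {n : ℕ} (M : Matrix (Fin n) (Fin n) ℂ) {U : Matrix (Fin n) (Fin n) ℂ}
    (hU : U ∈ unitaryGroup (Fin n) ℂ) :
    frobSq (star U * M * U) = frobSq M := by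
  have hUU : U * Uᴴ = 1 := mem_unitaryGroup_iff.mp hU
  have hgram : (star U * M * U)ᴴ * (star U * M * U) = star U * (Mᴴ * M) * U := by
    simp only [conjTranspose_mul, star_eq_conjTranspose, conjTranspose_conjTranspose, Matrix.mul_assoc]
    rw [← Matrix.mul_assoc U Uᴴ, hUU, Matrix.one_mul]
  rw [frobSq, frobSq, hgram, trace_mul_cycle, ← Matrix.mul_assoc, star_eq_conjTranspose, hUU,
    Matrix.one_mul]

lemma sq_le_normSq_sub_ofReal {z : ℂ} (hz : 0 ≤ z) {r : ℝ} (hr : r ≤ 0) :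
    r ^ 2 ≤ Complex.normSq (z - r) := by
  obtain ⟨hre, him⟩ := Complex.nonneg_iff.mp hz
  rw [Complex.normSq_apply, Complex.sub_re, Complex.sub_im, Complex.ofReal_re, Complex.ofReal_im,
    ← him]
  nlinarith

theorem stmt_2 {n : ℕ} (W : Matrix (Fin n) (Fin n) ℂ) (hW : W.IsHermitian)
    (X : Matrix (Fin n) (Fin n) ℂ) (hX : X.PosSemidef) :
    frobSq (X - W) ≥
      ∑ i ∈ Finset.univ.filter (fun i => hW.eigenvalues i ≤ 0), (hW.eigenvalues i) ^ 2 := by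
  set U : Matrix (Fin n) (Fin n) ℂ := ↑hW.eigenvectorUnitary
  set D : Matrix (Fin n) (Fin n) ℂ := diagonal (Complex.ofReal ∘ hW.eigenvalues)
  have hWdiag : star U * W * U = D := by
    simpa [Unitary.conjStarAlgAut_star_apply] using hW.conjStarAlgAut_star_eigenvectorUnitary
  have hY : (star U * X * U).PosSemidef := by
    simpa [star_eq_conjTranspose] using hX.conjTranspose_mul_mul_same U
  have hconj : frobSq (star U * X * U - D) = frobSq (X - W) := by
    rw [← hWdiag, ← Matrix.sub_mul, ← Matrix.mul_sub, frobSq_star_mul_mul _ hW.eigenvectorUnitary.2]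
  calc ∑ i ∈ univ.filter (fun i => hW.eigenvalues i ≤ 0), hW.eigenvalues i ^ 2
      ≤ ∑ i ∈ univ.filter (fun i => hW.eigenvalues i ≤ 0),
          Complex.normSq ((star U * X * U - D) i i) :=
        sum_le_sum fun i hi => by
          simpa [D] using sq_le_normSq_sub_ofReal hY.diag_nonneg (mem_filter.mp hi).2
    _ ≤ ∑ i, Complex.normSq ((star U * X * U - D) i i) :=
        sum_le_univ_sum_of_nonneg fun _ => Complex.normSq_nonneg _
    _ ≤ frobSq (X - W) := hconj ▸ sum_normSq_diag_le_frobSq _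
end

section
/- Let $a_1, a_2, c > 0$ and $b_1, b_2 \in \mathbb{R}$ with $b_1 < 0$ and $\frac{b_1^2}{a_1^2} + \frac{b_2^2}{a_2^2} > c^2$. Then the equation $b_1^2 (a_2 + 2\lambda)^2 + b_2^2 (a_1 + 2\lambda)^2 = c^2 (a_1 + 2\lambda)^2 (a_2 + 2\lambda)^2$ in the real variable $\lambda$ has exactly one solution with $\lambda > 0$. -/
/-!
For `λ > 0` the equation is equivalent to `g λ = c²`, where
`g λ = b₁² / (a₁ + 2λ)² + b₂² / (a₂ + 2λ)²`. On `[0, ∞)` the function `g` is continuous and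
strictly decreasing (since `b₁ ≠ 0`), tends to `0` at infinity, and `g 0 > c²` by hypothesis;
the intermediate value theorem gives a root and strict monotonicity makes it unique.
-/

open Set Filter Topology

section

variable {a : ℝ}

lemma antitoneOn_sq_div_sq (ha : 0 < a) (b : ℝ) :
    AntitoneOn (fun l : ℝ => b ^ 2 / (a + 2 * l) ^ 2) (Ici 0) := by
  intro x (hx : 0 ≤ x) y _ hxy
  dsimp only
  gcongr

lemma strictAntiOn_sq_div_sq (ha : 0 < a) {b : ℝ} (hb : b ≠ 0) :
    StrictAntiOn (fun l : ℝ => b ^ 2 / (a + 2 * l) ^ 2) (Ici 0) := by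
  intro x (hx : 0 ≤ x) y _ hxy
  have : 0 < b ^ 2 := by positivity
  dsimp only
  gcongr

lemma continuousOn_sq_div_sq (ha : 0 < a) (b : ℝ) :
    ContinuousOn (fun l : ℝ => b ^ 2 / (a + 2 * l) ^ 2) (Ici 0) :=
  continuousOn_const.div (by fun_prop) fun x (hx : 0 ≤ x) => by positivity

end

lemma tendsto_sq_div_sq_atTop (a b : ℝ) :
    Tendsto (fun l : ℝ => b ^ 2 / (a + 2 * l) ^ 2) atTop (𝓝 0) :=
  tendsto_const_nhds.div_atTop <| (tendsto_pow_atTop two_ne_zero).comp <|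
    tendsto_atTop_add_const_left _ a (tendsto_id.const_mul_atTop two_pos)

lemma add_div_sq_eq_iff {b₁ b₂ c x y : ℝ} (hx : x ≠ 0) (hy : y ≠ 0) :
    b₁ ^ 2 * y ^ 2 + b₂ ^ 2 * x ^ 2 = c ^ 2 * x ^ 2 * y ^ 2 ↔
      b₁ ^ 2 / x ^ 2 + b₂ ^ 2 / y ^ 2 = c ^ 2 := by
  rw [div_add_div _ _ (by positivity) (by positivity), div_eq_iff (by positivity)]
  ring_nf

lemma existsUnique_pos_eq_of_strictAntiOn {f : ℝ → ℝ} {y : ℝ} (hf : StrictAntiOn f (Ici 0))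
    (hcont : ContinuousOn f (Ici 0)) (h0 : y < f 0) (hlim : ∀ᶠ l in atTop, f l < y) :
    ∃! l, 0 < l ∧ f l = y := by
  obtain ⟨L, hfL, hL⟩ := (hlim.and (eventually_ge_atTop 0)).exists
  obtain ⟨l, hl, hfl⟩ :=
    intermediate_value_Icc' hL (hcont.mono Icc_subset_Ici_self) ⟨hfL.le, h0.le⟩
  have hl_pos : 0 < l := hl.1.lt_of_ne (by rintro rfl; exact h0.ne' hfl)
  exact ⟨l, ⟨hl_pos, hfl⟩, fun l' ⟨hl', hfl'⟩ => hf.injOn hl'.le hl.1 (hfl'.trans hfl.symm)⟩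

theorem stmt_11 (a₁ a₂ c b₁ b₂ : ℝ) (ha₁ : 0 < a₁) (ha₂ : 0 < a₂) (hc : 0 < c)
    (hb₁ : b₁ < 0) (hout : b₁ ^ 2 / a₁ ^ 2 + b₂ ^ 2 / a₂ ^ 2 > c ^ 2) :
    ∃! lam : ℝ, 0 < lam ∧
      b₁ ^ 2 * (a₂ + 2 * lam) ^ 2 + b₂ ^ 2 * (a₁ + 2 * lam) ^ 2 =
        c ^ 2 * (a₁ + 2 * lam) ^ 2 * (a₂ + 2 * lam) ^ 2 := by
  set g : ℝ → ℝ := fun l => b₁ ^ 2 / (a₁ + 2 * l) ^ 2 + b₂ ^ 2 / (a₂ + 2 * l) ^ 2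
  have hg_anti : StrictAntiOn g (Ici 0) :=
    (strictAntiOn_sq_div_sq ha₁ hb₁.ne).add_antitone (antitoneOn_sq_div_sq ha₂ b₂)
  have hg_cont : ContinuousOn g (Ici 0) :=
    (continuousOn_sq_div_sq ha₁ b₁).add (continuousOn_sq_div_sq ha₂ b₂)
  have hg_zero : c ^ 2 < g 0 := by simpa [g] using hout
  have hg_lim : ∀ᶠ l in atTop, g l < c ^ 2 := by
    have hg_tendsto : Tendsto g atTop (𝓝 0) := by
      simpa using (tendsto_sq_div_sq_atTop a₁ b₁).add (tendsto_sq_div_sq_atTop a₂ b₂)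
    exact hg_tendsto.eventually (gt_mem_nhds (by positivity))
  refine (existsUnique_congr fun l => and_congr_right fun hl => ?_).mp
    (existsUnique_pos_eq_of_strictAntiOn hg_anti hg_cont hg_zero hg_lim)
  exact (add_div_sq_eq_iff (by positivity) (by positivity)).symm
end

section
/- Let $a_1, a_2, c > 0$ and $b_1, b_2 \in \mathbb{R}$ with $b_1 < 0$ and $\frac{b_1^2}{a_1^2} + \frac{b_2^2}{a_2^2} > c^2$, and let $\lambda^* > 0$ be a solution of $b_1^2 (a_2 + 2\lambda)^2 + b_2^2 (a_1 + 2\lambda)^2 = c^2 (a_1 + 2\lambda)^2 (a_2 + 2\lambda)^2$. Define $f(p,q) := \frac{a_1}{2} p^2 + b_1 p + \frac{a_2}{2} q^2 + b_2 q$ and $D := \{(p,q) \in \mathbb{R}^2 : p^2 + q^2 \leq c^2,\ p \geq 0\}$. Then the point $(p^*, q^*) := \left(-\frac{b_1}{a_1 + 2\lambda^*}, -\frac{b_2}{a_2 + 2\lambda^*}\right)$ belongs to $D$ and satisfies $f(p,q) \geq f(p^*, q^*)$ for all $(p,q) \in D$. -/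
theorem stmt_13 (a₁ a₂ c b₁ b₂ lam : ℝ) (ha₁ : 0 < a₁) (ha₂ : 0 < a₂) (hc : 0 < c)
    (hb₁ : b₁ < 0) (hout : b₁ ^ 2 / a₁ ^ 2 + b₂ ^ 2 / a₂ ^ 2 > c ^ 2) (hlam : 0 < lam)
    (heq : b₁ ^ 2 * (a₂ + 2 * lam) ^ 2 + b₂ ^ 2 * (a₁ + 2 * lam) ^ 2 =
      c ^ 2 * (a₁ + 2 * lam) ^ 2 * (a₂ + 2 * lam) ^ 2) :
    ((-b₁ / (a₁ + 2 * lam)) ^ 2 + (-b₂ / (a₂ + 2 * lam)) ^ 2 ≤ c ^ 2 ∧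
      0 ≤ -b₁ / (a₁ + 2 * lam)) ∧
    ∀ p q : ℝ, p ^ 2 + q ^ 2 ≤ c ^ 2 → 0 ≤ p →
      a₁ / 2 * p ^ 2 + b₁ * p + a₂ / 2 * q ^ 2 + b₂ * q ≥
        a₁ / 2 * (-b₁ / (a₁ + 2 * lam)) ^ 2 + b₁ * (-b₁ / (a₁ + 2 * lam)) +
          a₂ / 2 * (-b₂ / (a₂ + 2 * lam)) ^ 2 + b₂ * (-b₂ / (a₂ + 2 * lam)) := by
  have hA : 0 < a₁ + 2 * lam := by linarith
  have hB : 0 < a₂ + 2 * lam := by linarith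
  have hcirc : (-b₁ / (a₁ + 2 * lam)) ^ 2 + (-b₂ / (a₂ + 2 * lam)) ^ 2 = c ^ 2 := by
    field_simp
    nlinarith [heq]
  refine ⟨⟨le_of_eq hcirc, div_nonneg (by linarith) hA.le⟩, ?_⟩
  intro p q hpq _
  -- penalized quadratic argument
  have h1 : (a₁ + 2 * lam) / 2 * p ^ 2 + b₁ * p ≥
      (a₁ + 2 * lam) / 2 * (-b₁ / (a₁ + 2 * lam)) ^ 2 + b₁ * (-b₁ / (a₁ + 2 * lam)) := by
    have key : 0 ≤ (a₁ + 2 * lam) / 2 * (p + b₁ / (a₁ + 2 * lam)) ^ 2 := by positivity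
    have : (a₁ + 2 * lam) / 2 * (p + b₁ / (a₁ + 2 * lam)) ^ 2 =
        ((a₁ + 2 * lam) / 2 * p ^ 2 + b₁ * p) -
        ((a₁ + 2 * lam) / 2 * (-b₁ / (a₁ + 2 * lam)) ^ 2 + b₁ * (-b₁ / (a₁ + 2 * lam))) := by
      field_simp
      ring
    linarith
  have h2 : (a₂ + 2 * lam) / 2 * q ^ 2 + b₂ * q ≥
      (a₂ + 2 * lam) / 2 * (-b₂ / (a₂ + 2 * lam)) ^ 2 + b₂ * (-b₂ / (a₂ + 2 * lam)) := by
    have key : 0 ≤ (a₂ + 2 * lam) / 2 * (q + b₂ / (a₂ + 2 * lam)) ^ 2 := by positivity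
    have : (a₂ + 2 * lam) / 2 * (q + b₂ / (a₂ + 2 * lam)) ^ 2 =
        ((a₂ + 2 * lam) / 2 * q ^ 2 + b₂ * q) -
        ((a₂ + 2 * lam) / 2 * (-b₂ / (a₂ + 2 * lam)) ^ 2 + b₂ * (-b₂ / (a₂ + 2 * lam))) := by
      field_simp
      ring
    linarith
  nlinarith [hpq, hcirc, hlam]
end
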